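/- arXiv:1409.3403 — 2 statements merged into one kernel-verified Lean document; each statement's English description precedes it below -/
import Mathlib

section
/- Let φ₀, φ₁, φ₂, φ₃ be homogeneous quadratic polynomials in x₀, x₁, x₂ over ℂ satisfying φ₀φ₁ = φ₂φ₃ identically, such that no two of them are proportional (equivalently, the image of the corresponding map is not contained in a plane of the quadric u₀u₁ = u₂u₃). Then there exist linear forms ψ₀, ψ₁, ψ₂, ψ₃ with φ₀ = ψ₀ψ₁, φ₁ = ψ₂ψ₃, φ₂ = ψ₀ψ₂, φ₃ = ψ₁ψ₃. -/
/-! Since `ℂ[x₀,x₁,x₂]` is a UFD, `φ₀φ₁ = φ₂φ₃` alone gives `φ₀ = ψ₀ψ₁`, `φ₁ = ψ₂ψ₃`,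
`φ₂ = ψ₀ψ₂`, `φ₃ = ψ₁ψ₃` for some polynomials `ψᵢ` (split `φ₂` along `φ₀φ₁`); only their
degrees need care. Factors of a homogeneous polynomial are homogeneous, because the top and
bottom degrees in `t` of `p(t • x)` add up under multiplication. The degrees `dᵢ` of the `ψᵢ`
then satisfy `d₀ + d₁ = d₂ + d₃ = d₀ + d₂ = d₁ + d₃ = 2`, and unless they are all `1`, either
`ψ₀, ψ₃` or `ψ₁, ψ₂` are constants, making `φ₀` proportional to `φ₃` or to `φ₂`. -/

open MvPolynomial

theorem exists_factors_of_mul_eq_mul {α : Type*} [CommMonoidWithZero α] [IsCancelMulZero α]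
    [DecompositionMonoid α] {x y z w : α} (h : x * y = z * w) (hz : z ≠ 0) :
    ∃ a b c d, x = a * b ∧ y = c * d ∧ z = a * c ∧ w = b * d := by
  obtain ⟨a, c, ⟨b, rfl⟩, ⟨d, rfl⟩, rfl⟩ := exists_dvd_and_dvd_of_dvd_mul (Dvd.intro w h.symm)
  exact ⟨a, b, c, d, rfl, rfl, rfl, mul_left_cancel₀ hz (h.symm.trans (mul_mul_mul_comm a b c d))⟩

namespace MvPolynomial

section CommSemiring

variable {σ R : Type*} [CommSemiring R]

lemma isHomogeneous_of_homogeneousComponent_eq_zero {p : MvPolynomial σ R} {n : ℕ}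
    (h : ∀ m ≠ n, homogeneousComponent m p = 0) : p.IsHomogeneous n := by
  intro d hd
  simp only [Pi.one_def, ← Finsupp.degree_eq_weight_one]
  by_contra hne
  simpa [coeff_homogeneousComponent, hd] using congr(coeff d $(h _ hne))

noncomputable def dilate : MvPolynomial σ R →ₐ[R] Polynomial (MvPolynomial σ R) :=
  aeval fun i => Polynomial.C (X i) * Polynomial.X

lemma dilate_monomial (u : σ →₀ ℕ) (c : R) :
    dilate (monomial u c) = Polynomial.monomial u.degree (monomial u c) := by
  have hX : (u.prod fun _ k => (Polynomial.X : Polynomial (MvPolynomial σ R)) ^ k) =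
      Polynomial.X ^ u.degree := Finset.prod_pow_eq_pow_sum _ _ _
  simp only [dilate, aeval_monomial, mul_pow, Finsupp.prod_mul, ← map_pow, ← map_finsuppProd, hX]
  rw [← Polynomial.C_mul_X_pow_eq_monomial, monomial_eq]
  simp [Polynomial.algebraMap_apply, algebraMap_eq, mul_assoc, Finsupp.prod]

lemma coeff_dilate (p : MvPolynomial σ R) (n : ℕ) :
    (dilate p).coeff n = homogeneousComponent n p := by
  induction p using MvPolynomial.induction_on' with
  | monomial u c =>
    rw [dilate_monomial, Polynomial.coeff_monomial,
      homogeneousComponent_of_mem (isHomogeneous_monomial c rfl)]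
    grind
  | add p q hp hq => simp [hp, hq]

lemma IsHomogeneous.dilate_eq {p : MvPolynomial σ R} {n : ℕ} (h : p.IsHomogeneous n) :
    dilate p = Polynomial.monomial n p := by
  ext m : 1
  rw [coeff_dilate, Polynomial.coeff_monomial, homogeneousComponent_of_mem h]
  grind

lemma isHomogeneous_natDegree_dilate {p : MvPolynomial σ R}
    (h : (dilate p).natDegree ≤ (dilate p).natTrailingDegree) :
    p.IsHomogeneous (dilate p).natDegree := by
  refine isHomogeneous_of_homogeneousComponent_eq_zero fun m hm => ?_
  rw [← coeff_dilate]
  rcases hm.lt_or_gt with hlt | hgt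
  · exact Polynomial.coeff_eq_zero_of_lt_natTrailingDegree (hlt.trans_le h)
  · exact Polynomial.coeff_eq_zero_of_natDegree_lt hgt

end CommSemiring

lemma IsHomogeneous.exists_isHomogeneous_of_mul {σ R : Type*} [CommSemiring R] [NoZeroDivisors R]
    {p q : MvPolynomial σ R} {n : ℕ} (h : (p * q).IsHomogeneous n) (hpq : p * q ≠ 0) :
    ∃ i j, i + j = n ∧ p.IsHomogeneous i ∧ q.IsHomogeneous j := by
  have hdilate : dilate p * dilate q = Polynomial.monomial n (p * q) := by
    rw [← map_mul, h.dilate_eq]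
  have hne : dilate p * dilate q ≠ 0 := by
    rwa [hdilate, Ne, Polynomial.monomial_eq_zero_iff]
  obtain ⟨hp0, hq0⟩ := mul_ne_zero_iff.mp hne
  have hdeg := Polynomial.natDegree_mul hp0 hq0
  have htrail := Polynomial.natTrailingDegree_mul hp0 hq0
  rw [hdilate, Polynomial.natDegree_monomial_eq _ hpq] at hdeg
  rw [hdilate, Polynomial.natTrailingDegree_monomial hpq] at htrail
  have hp := (dilate p).natTrailingDegree_le_natDegree
  have hq := (dilate q).natTrailingDegree_le_natDegree
  exact ⟨_, _, hdeg.symm, isHomogeneous_natDegree_dilate (by omega),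
    isHomogeneous_natDegree_dilate (by omega)⟩

lemma exists_mul_eq_smul_mul_of_isHomogeneous_zero {σ K : Type*} [Field K]
    {c d : MvPolynomial σ K} (hc : c.IsHomogeneous 0) (hd : d.IsHomogeneous 0) (hd0 : d ≠ 0)
    (w : MvPolynomial σ K) : ∃ t : K, c * w = t • (d * w) := by
  rw [← totalDegree_zero_iff_isHomogeneous, totalDegree_eq_zero_iff_eq_C] at hc hd
  generalize coeff 0 c = a at hc
  generalize coeff 0 d = b at hd
  subst hc hd
  have hb : b ≠ 0 := by rintro rfl; exact hd0 C_0
  exact ⟨a / b, by rw [smul_eq_C_mul, ← mul_assoc, ← C_mul, div_mul_cancel₀ _ hb]⟩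

end MvPolynomial

/-- Let `φ₀, φ₁, φ₂, φ₃` be homogeneous quadratic polynomials in `x₀, x₁, x₂`
over `ℂ` with `φ₀φ₁ = φ₂φ₃`, no two of which are proportional. Then there exist
linear forms `ψ₀, ψ₁, ψ₂, ψ₃` with `φ₀ = ψ₀ψ₁`, `φ₁ = ψ₂ψ₃`, `φ₂ = ψ₀ψ₂`,
`φ₃ = ψ₁ψ₃`. -/
theorem quadric_parametrization_factors
    (φ : Fin 4 → MvPolynomial (Fin 3) ℂ)
    (hφ : ∀ α, (φ α).IsHomogeneous 2)
    (hrel : φ 0 * φ 1 = φ 2 * φ 3)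
    (hprop : ∀ α β : Fin 4, α ≠ β → ∀ t : ℂ, φ α ≠ t • φ β) :
    ∃ ψ : Fin 4 → MvPolynomial (Fin 3) ℂ,
      (∀ α, (ψ α).IsHomogeneous 1) ∧
      φ 0 = ψ 0 * ψ 1 ∧ φ 1 = ψ 2 * ψ 3 ∧ φ 2 = ψ 0 * ψ 2 ∧ φ 3 = ψ 1 * ψ 3 := by
  have hne (α : Fin 4) : φ α ≠ 0 := by
    simpa using hprop α (α + 1) (by fin_cases α <;> decide) 0
  obtain ⟨ψ₀, ψ₁, ψ₂, ψ₃, h₀, h₁, h₂, h₃⟩ := exists_factors_of_mul_eq_mul hrel (hne 2)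
  obtain ⟨d₀, d₁, hd₀₁, hψ₀, hψ₁⟩ := (h₀ ▸ hφ 0).exists_isHomogeneous_of_mul (h₀ ▸ hne 0)
  obtain ⟨d₂, d₃, hd₂₃, hψ₂, hψ₃⟩ := (h₁ ▸ hφ 1).exists_isHomogeneous_of_mul (h₁ ▸ hne 1)
  have hd₀₂ : d₀ + d₂ = 2 := (hψ₀.mul hψ₂).inj_right (h₂ ▸ hφ 2) (h₂ ▸ hne 2)
  have hd₁₃ : d₁ + d₃ = 2 := (hψ₁.mul hψ₃).inj_right (h₃ ▸ hφ 3) (h₃ ▸ hne 3)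
  have hd₀ : d₀ = 1 := by
    rcases (by omega : d₀ = 0 ∨ d₀ = 1 ∨ d₀ = 2) with h | h | h
    · obtain ⟨t, ht⟩ := exists_mul_eq_smul_mul_of_isHomogeneous_zero (h ▸ hψ₀)
        ((by omega : d₃ = 0) ▸ hψ₃) (right_ne_zero_of_mul (h₁ ▸ hne 1)) ψ₁
      exact absurd (by rw [h₀, h₃, ht, mul_comm ψ₁]) (hprop 0 3 (by decide) t)
    · exact h
    · obtain ⟨t, ht⟩ := exists_mul_eq_smul_mul_of_isHomogeneous_zero ((by omega : d₁ = 0) ▸ hψ₁)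
        ((by omega : d₂ = 0) ▸ hψ₂) (left_ne_zero_of_mul (h₁ ▸ hne 1)) ψ₀
      exact absurd (by rw [h₀, h₂, mul_comm ψ₀, ht, mul_comm ψ₂]) (hprop 0 2 (by decide) t)
  obtain ⟨rfl, rfl, rfl, rfl⟩ : d₀ = 1 ∧ d₁ = 1 ∧ d₂ = 1 ∧ d₃ = 1 := by omega
  refine ⟨![ψ₀, ψ₁, ψ₂, ψ₃], fun α => ?_, h₀, h₁, h₂, h₃⟩
  fin_cases α <;> assumption
end

section
/- The quadratic maps Φ₂ : [x₀:x₁:x₂] ↦ [x₀²:x₀x₁:x₁²:x₂x₀] and Φ₃ : [x₀:x₁:x₂] ↦ [x₀²:x₀x₁:x₁²:x₂²] are not projectively equivalent: there exist no projective transformations η ∈ PGL₃ (source) and μ ∈ PGL₄ (target) with Φ₂ = μ ∘ Φ₃ ∘ η on a nonempty Zariski open set. (One distinguishing invariant: Φ₂ is co-trivial — every line maps into a plane through [0:0:1:0] — while Φ₃ is not co-trivial.) -/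
open Topology Set

/-!
If `Φ₂ = c • Q` on an open set, with `Q := h ∘ Φ₃ ∘ g`, the 2×2 minors `Φ₂ᵢ Qⱼ - Φ₂ⱼ Qᵢ` are
analytic and vanish there, hence everywhere. Near the base point `[0:0:1]` of `Φ₂` this pins
down `Q`: on the line `[0:s:1]` we have `Φ₂ = (0, 0, s², 0)`, on the line `[s:0:1]` we have
`Φ₂ = (s², 0, 0, s)`, so letting `s → 0` every coordinate of `Q` vanishes at `[0:0:1]`.
But `Φ₃` has no base point and `g`, `h` are invertible.
-/

def phi2 (x : Fin 3 → ℂ) : Fin 4 → ℂ := ![x 0 ^ 2, x 0 * x 1, x 1 ^ 2, x 2 * x 0]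

def phi3 (x : Fin 3 → ℂ) : Fin 4 → ℂ := ![x 0 ^ 2, x 0 * x 1, x 1 ^ 2, x 2 ^ 2]

lemma analyticAt_apply {𝕜 ι : Type*} [NontriviallyNormedField 𝕜] [Fintype ι] (i : ι)
    (x : ι → 𝕜) : AnalyticAt 𝕜 (fun x : ι → 𝕜 => x i) x :=
  (ContinuousLinearMap.proj i : (ι → 𝕜) →L[𝕜] 𝕜).analyticAt x

lemma analyticOnNhd_phi2 : AnalyticOnNhd ℂ phi2 univ := fun x _ => by
  refine AnalyticAt.pi fun i => ?_
  fin_cases i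
  · exact (analyticAt_apply 0 x).pow 2
  · exact (analyticAt_apply 0 x).mul (analyticAt_apply 1 x)
  · exact (analyticAt_apply 1 x).pow 2
  · exact (analyticAt_apply 2 x).mul (analyticAt_apply 0 x)

lemma analyticOnNhd_phi3 : AnalyticOnNhd ℂ phi3 univ := fun x _ => by
  refine AnalyticAt.pi fun i => ?_
  fin_cases i
  · exact (analyticAt_apply 0 x).pow 2
  · exact (analyticAt_apply 0 x).mul (analyticAt_apply 1 x)
  · exact (analyticAt_apply 1 x).pow 2
  · exact (analyticAt_apply 2 x).pow 2

lemma phi3_eq_zero_iff {x : Fin 3 → ℂ} : phi3 x = 0 ↔ x = 0 := by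
  refine ⟨fun h => ?_, fun h => by simp [h, phi3]⟩
  have h0 : x 0 ^ 2 = 0 := congrFun h 0
  have h1 : x 1 ^ 2 = 0 := congrFun h 2
  have h2 : x 2 ^ 2 = 0 := congrFun h 3
  ext i
  fin_cases i <;> simp_all

lemma apply_eq_zero_of_cross_eq {K ι : Type*} [Field K] {p q : ι → K}
    (hcross : ∀ i j, p i * q j = p j * q i) (hp : p ≠ 0) {i : ι} (hi : p i = 0) : q i = 0 := by
  obtain ⟨j, hj⟩ := Function.ne_iff.mp hp
  have := hcross i j
  rw [hi, zero_mul] at this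
  exact (mul_eq_zero.mp this.symm).resolve_left hj

lemma cross_eq_of_proportional_on_open {E ι : Type*} [NormedAddCommGroup E] [NormedSpace ℂ E]
    [Fintype ι] {P Q : E → ι → ℂ} (hP : AnalyticOnNhd ℂ P univ) (hQ : AnalyticOnNhd ℂ Q univ)
    {U : Set E} (hU : IsOpen U) (hne : U.Nonempty) (hprop : ∀ x ∈ U, ∃ c : ℂ, P x = c • Q x)
    (x : E) (i j : ι) : P x i * Q x j = P x j * Q x i := by
  obtain ⟨x₀, hx₀⟩ := hne
  have hcoord : ∀ {F : E → ι → ℂ}, AnalyticOnNhd ℂ F univ → ∀ k, AnalyticOnNhd ℂ (F · k) univ :=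
    fun hF k y hy => (analyticAt_apply k _).comp (hF y hy)
  have hanalytic : AnalyticOnNhd ℂ (fun y => P y i * Q y j - P y j * Q y i) univ :=
    ((hcoord hP i).mul (hcoord hQ j)).sub ((hcoord hP j).mul (hcoord hQ i))
  have hlocal : (fun y => P y i * Q y j - P y j * Q y i) =ᶠ[𝓝 x₀] 0 := by
    filter_upwards [hU.mem_nhds hx₀] with y hy
    obtain ⟨c, hc⟩ := hprop y hy
    simp only [hc, Pi.smul_apply, smul_eq_mul, Pi.zero_apply]
    ring
  have := hanalytic.eqOn_zero_of_preconnected_of_eventuallyEq_zero isPreconnected_univ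
    (mem_univ x₀) hlocal (mem_univ x)
  exact sub_eq_zero.mp this

lemma apply_eq_zero_of_cross_eq_along {E ι : Type*} [TopologicalSpace E] {P Q : E → ι → ℂ}
    (hQ : Continuous Q) (hcross : ∀ x i j, P x i * Q x j = P x j * Q x i) {γ : ℂ → E}
    (hγ : Continuous γ) {i : ι} (hP : ∀ s ≠ 0, P (γ s) ≠ 0 ∧ P (γ s) i = 0) :
    Q (γ 0) i = 0 := by
  have hzero : EqOn (fun s => Q (γ s) i) 0 {0}ᶜ := fun s hs =>
    apply_eq_zero_of_cross_eq (hcross _) (hP s hs).1 (hP s hs).2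
  exact congrFun (Continuous.ext_on (dense_compl_singleton 0)
    ((continuous_apply i).comp (hQ.comp hγ)) continuous_const hzero) 0

lemma eq_zero_at_baseLocus_of_cross_eq_phi2 {Q : (Fin 3 → ℂ) → Fin 4 → ℂ} (hQ : Continuous Q)
    (hcross : ∀ x i j, phi2 x i * Q x j = phi2 x j * Q x i) : Q ![0, 0, 1] = 0 := by
  have hγ₁ : Continuous fun s : ℂ => (![0, s, 1] : Fin 3 → ℂ) := by
    refine continuous_pi fun k => ?_
    fin_cases k <;> simp [continuous_const, continuous_id']
  have hγ₂ : Continuous fun s : ℂ => (![s, 0, 1] : Fin 3 → ℂ) := by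
    refine continuous_pi fun k => ?_
    fin_cases k <;> simp [continuous_const, continuous_id']
  have hphi2₁ : ∀ s : ℂ, phi2 ![0, s, 1] = ![0, 0, s ^ 2, 0] := by
    intro s; ext k; fin_cases k <;> simp [phi2]
  have hphi2₂ : ∀ s : ℂ, phi2 ![s, 0, 1] = ![s ^ 2, 0, 0, s] := by
    intro s; ext k; fin_cases k <;> simp [phi2]
  have hoff : ∀ k ≠ 2, Q ![0, 0, 1] k = 0 := fun k hk =>
    apply_eq_zero_of_cross_eq_along hQ hcross hγ₁ fun s hs => by
      refine ⟨fun h => hs ?_, ?_⟩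
      · simpa [hphi2₁] using congrFun h 2
      · fin_cases k <;> simp_all
  have hon : Q ![0, 0, 1] 2 = 0 :=
    apply_eq_zero_of_cross_eq_along hQ hcross hγ₂ fun s hs => by
      refine ⟨fun h => hs ?_, by simp [hphi2₂]⟩
      simpa [hphi2₂] using congrFun h 0
  ext k
  by_cases hk : k = 2
  · subst hk; exact hon
  · exact hoff k hk

/-- The quadratic maps `Φ₂ : [x₀:x₁:x₂] ↦ [x₀² : x₀x₁ : x₁² : x₂x₀]` and
`Φ₃ : [x₀:x₁:x₂] ↦ [x₀² : x₀x₁ : x₁² : x₂²]` are not projectively equivalent: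
there are no linear changes of coordinates `g` in the source and `h` in the
target such that `Φ₂` and `h ∘ Φ₃ ∘ g` agree (projectively, pointwise up to
nonzero scalars) on some nonempty open set. -/
theorem phi2_phi3_not_equivalent :
    ¬ ∃ (g : (Fin 3 → ℂ) ≃ₗ[ℂ] (Fin 3 → ℂ))
        (h : (Fin 4 → ℂ) ≃ₗ[ℂ] (Fin 4 → ℂ))
        (U : Set (Fin 3 → ℂ)), IsOpen U ∧ U.Nonempty ∧
        ∀ x ∈ U, ∃ c : ℂ, c ≠ 0 ∧
          (![x 0 ^ 2, x 0 * x 1, x 1 ^ 2, x 2 * x 0] : Fin 4 → ℂ)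
            = c • h ![(g x) 0 ^ 2, (g x) 0 * (g x) 1, (g x) 1 ^ 2,
                      (g x) 2 ^ 2] := by
  rintro ⟨g, h, U, hU, hne, hprop⟩
  set Q : (Fin 3 → ℂ) → Fin 4 → ℂ := fun x => h (phi3 (g x))
  have hQ : AnalyticOnNhd ℂ Q univ := fun x _ =>
    (LinearMap.toContinuousLinearMap h.toLinearMap).analyticAt _ |>.comp <|
      (analyticOnNhd_phi3 _ (mem_univ _)).comp <|
        (LinearMap.toContinuousLinearMap g.toLinearMap).analyticAt x
  have hcross := cross_eq_of_proportional_on_open analyticOnNhd_phi2 hQ hU hne fun x hx => by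
    obtain ⟨c, -, hc⟩ := hprop x hx
    exact ⟨c, hc⟩
  have hbase : h (phi3 (g ![0, 0, 1])) = 0 :=
    eq_zero_at_baseLocus_of_cross_eq_phi2 (continuousOn_univ.mp hQ.continuousOn) hcross
  rw [LinearEquiv.map_eq_zero_iff, phi3_eq_zero_iff, LinearEquiv.map_eq_zero_iff] at hbase
  simpa using congrFun hbase 2
end
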